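/- arXiv:1507.01249 — 10 statements merged into one kernel-verified Lean document; each statement's English description precedes it below -/
import Mathlib

section
/- Let R be a ring with 1 ≠ 0. If there exist elements r1, r2, d1, d2 in R with d1·r1 = 1, d2·r2 = 1, d1·r2 = 0, and d2·r1 = 0, then R is not Dedekind finite, i.e., there exist x, y in R with xy = 1 but yx ≠ 1. -/
theorem mul_ne_one_of_mul_eq_one_of_mul_eq_zero {M₀ : Type*} [MonoidWithZero M₀]
    {d r s : M₀} (hdr : d * r = 1) (hds : d * s = 0) (hs : s ≠ 0) : r * d ≠ 1 :=
  fun hrd => hs ((Units.mul_right_eq_zero ⟨d, r, hdr, hrd⟩).mp hds)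

theorem star_star_condition_implies_not_dedekind_finite (R : Type*) [Ring R]
    (hne : (1 : R) ≠ 0)
    (h : ∃ r1 r2 d1 d2 : R, d1 * r1 = 1 ∧ d2 * r2 = 1 ∧ d1 * r2 = 0 ∧ d2 * r1 = 0) :
    ∃ x y : R, x * y = 1 ∧ y * x ≠ 1 := by
  obtain ⟨r1, r2, d1, d2, h11, h22, h12, -⟩ := h
  have hr2 : r2 ≠ 0 := by
    rintro rfl
    exact hne (h22 ▸ mul_zero d2)
  exact ⟨d1, r1, h11, mul_ne_one_of_mul_eq_one_of_mul_eq_zero h11 h12 hr2⟩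
end

section
/- Let R be a ring with 1 and M a (left) R-module on which R acts faithfully (i.e., for all r, s in R, if r·m = s·m for all m in M then r = s). Then the following are equivalent: (i) there exist r1, r2, d1, d2 in R such that for all m1, m2 in M, d1·(r1·m1 + r2·m2) = m1 and d2·(r1·m1 + r2·m2) = m2; (ii) there exist r1, r2, d1, d2 in R with d1·r1 = 1, d2·r2 = 1, d1·r2 = 0, and d2·r1 = 0. -/
section Decoding

variable {R M : Type*} [Semiring R] [AddCommMonoid M] [Module R M] [FaithfulSMul R M]

theorem forall_smul_add_smul_eq_left_iff {r r' d : R} :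
    (∀ m m' : M, d • (r • m + r' • m') = m) ↔ d * r = 1 ∧ d * r' = 0 := by
  constructor
  · intro h
    refine ⟨eq_of_smul_eq_smul fun m : M => ?_, eq_of_smul_eq_smul fun m : M => ?_⟩
    · simpa [mul_smul] using h m 0
    · simpa [mul_smul] using h 0 m
  · rintro ⟨hr, hr'⟩ m m'
    rw [smul_add, ← mul_smul, ← mul_smul, hr, hr', one_smul, zero_smul, add_zero]

theorem forall_smul_add_smul_eq_right_iff {r r' d : R} :
    (∀ m m' : M, d • (r • m + r' • m') = m') ↔ d * r' = 1 ∧ d * r = 0 := by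
  simp_rw [add_comm (r • _)]
  exact forall_comm.trans forall_smul_add_smul_eq_left_iff

end Decoding

theorem wingless_butterfly_module_iff_ring (R : Type*) [Ring R]
    (M : Type*) [AddCommGroup M] [Module R M]
    (hfaithful : ∀ r s : R, (∀ m : M, r • m = s • m) → r = s) :
    (∃ r1 r2 d1 d2 : R, ∀ m1 m2 : M,
        d1 • (r1 • m1 + r2 • m2) = m1 ∧ d2 • (r1 • m1 + r2 • m2) = m2) ↔
      (∃ r1 r2 d1 d2 : R, d1 * r1 = 1 ∧ d2 * r2 = 1 ∧ d1 * r2 = 0 ∧ d2 * r1 = 0) := by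
  have : FaithfulSMul R M := ⟨hfaithful _ _⟩
  simp_rw [forall_and, forall_smul_add_smul_eq_left_iff, forall_smul_add_smul_eq_right_iff]
  exact exists₄_congr fun _ _ _ _ => by tauto
end

section
/- Let R be a ring with 1 in which 1 + 1 = 0. Then there exist elements r14, r16, r24, r25, r26, r35, r36, r311, r47, r48, r58, r59, r67, r69, r610, r810, r811 in R satisfying the twelve equations: (1) r69·r16 = 1; (2) r810·r48·r14 + r610·r16 = 0; (3) r47·r14 + r67·r16 = 0; (4) r811·r48·r14 = 1; (5) r59·r25 + r69·r26 = 0; (6) r810·r48·r24 + r810·r58·r25 + r610·r26 = 1; (7) r47·r24 + r67·r26 = 0; (8) r811·r48·r24 + r811·r58·r25 = 0; (9) r59·r35 + r69·r36 = 0; (10) r610·r36 + r810·r58·r35 = 0; (11) r67·r36 = 1; (12) r811·r58·r35 + r311 = 0. In fact, taking every one of these elements equal to 1 gives a solution. -/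
theorem figure6_solvable_of_char_two (R : Type*) [Ring R] (h2 : (1 : R) + 1 = 0) :
    ∃ r14 r16 r24 r25 r26 r35 r36 r311 r47 r48 r58 r59 r67 r69 r610 r810 r811 : R,
      r69 * r16 = 1 ∧
      r810 * r48 * r14 + r610 * r16 = 0 ∧
      r47 * r14 + r67 * r16 = 0 ∧
      r811 * r48 * r14 = 1 ∧
      r59 * r25 + r69 * r26 = 0 ∧
      r810 * r48 * r24 + r810 * r58 * r25 + r610 * r26 = 1 ∧
      r47 * r24 + r67 * r26 = 0 ∧
      r811 * r48 * r24 + r811 * r58 * r25 = 0 ∧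
      r59 * r35 + r69 * r36 = 0 ∧
      r610 * r36 + r810 * r58 * r35 = 0 ∧
      r67 * r36 = 1 ∧
      r811 * r58 * r35 + r311 = 0 ∧
      -- the all-ones assignment is a solution
      (r14 = 1 ∧ r16 = 1 ∧ r24 = 1 ∧ r25 = 1 ∧ r26 = 1 ∧ r35 = 1 ∧ r36 = 1 ∧ r311 = 1 ∧
       r47 = 1 ∧ r48 = 1 ∧ r58 = 1 ∧ r59 = 1 ∧ r67 = 1 ∧ r69 = 1 ∧ r610 = 1 ∧
       r810 = 1 ∧ r811 = 1) :=
  ⟨1, 1, 1, 1, 1, 1, 1, 1, 1, 1, 1, 1, 1, 1, 1, 1, 1, by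
    simp only [mul_one, h2, zero_add, and_self]⟩
end

section
/- Let R be a Dedekind finite ring with 1 (i.e., for all x, y in R, xy = 1 implies yx = 1). If there exist elements r14, r16, r24, r25, r26, r35, r36, r311, r47, r48, r58, r59, r67, r69, r610, r810, r811 in R satisfying the twelve equations: (1) r69·r16 = 1; (2) r810·r48·r14 + r610·r16 = 0; (3) r47·r14 + r67·r16 = 0; (4) r811·r48·r14 = 1; (5) r59·r25 + r69·r26 = 0; (6) r810·r48·r24 + r810·r58·r25 + r610·r26 = 1; (7) r47·r24 + r67·r26 = 0; (8) r811·r48·r24 + r811·r58·r25 = 0; (9) r59·r35 + r69·r36 = 0; (10) r610·r36 + r810·r58·r35 = 0; (11) r67·r36 = 1; (12) r811·r58·r35 + r311 = 0, then 1 + 1 = 0 in R. -/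
/-!
Dedekind finiteness turns every one-sided inverse appearing in the equations into a two-sided
one, so the operators on the edges `1 → 4`, `3 → 6`, `6 → 7`, `1 → 6`, `6 → 9` and, once the
equation of receiver 10 for source 2 has been reduced to `r810 * r58 * r25 = 1`, also on `2 → 5`
and `8 → 10` are units. Cancelling them solves the system step by step and yields
`r59 = r811 * r58` and `r811 * r58 * r35 = r69 * r36`, after which the equation of receiver 9
for source 3 reads `2 * (r69 * r36) = 0` with `r69 * r36` a unit.
-/

/-- A linear solution of the network of figure 6: `rij` is the operator on the edge `i → j`,
the sources are the nodes `1, 2, 3`, the receivers are `7, 9, 10, 11`, and `transfer_s_t` is the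
equation for source `s` at receiver `t`. -/
structure Figure6Solution (R : Type*) [Semiring R] where
  (r14 r16 r24 r25 r26 r35 r36 r311 r47 r48 r58 r59 r67 r69 r610 r810 r811 : R)
  transfer_1_9 : r69 * r16 = 1
  transfer_1_10 : r810 * r48 * r14 + r610 * r16 = 0
  transfer_1_7 : r47 * r14 + r67 * r16 = 0
  transfer_1_11 : r811 * r48 * r14 = 1
  transfer_2_9 : r59 * r25 + r69 * r26 = 0
  transfer_2_10 : r810 * r48 * r24 + r810 * r58 * r25 + r610 * r26 = 1
  transfer_2_7 : r47 * r24 + r67 * r26 = 0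
  transfer_2_11 : r811 * r48 * r24 + r811 * r58 * r25 = 0
  transfer_3_9 : r59 * r35 + r69 * r36 = 0
  transfer_3_10 : r610 * r36 + r810 * r58 * r35 = 0
  transfer_3_7 : r67 * r36 = 1
  transfer_3_11 : r811 * r58 * r35 + r311 = 0

namespace Figure6Solution

variable {R : Type*} [Ring R] [IsDedekindFiniteMonoid R] (s : Figure6Solution R)

theorem isUnit_r14 : IsUnit s.r14 := .of_mul_eq_one_right _ s.transfer_1_11

theorem isUnit_r16 : IsUnit s.r16 := .of_mul_eq_one_right _ s.transfer_1_9

theorem isUnit_r69 : IsUnit s.r69 := .of_mul_eq_one _ s.transfer_1_9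

theorem isUnit_r36 : IsUnit s.r36 := .of_mul_eq_one_right _ s.transfer_3_7

theorem isUnit_r67 : IsUnit s.r67 := .of_mul_eq_one _ s.transfer_3_7

theorem r47_eq : s.r47 = -(s.r67 * s.r16 * (s.r811 * s.r48)) :=
  s.isUnit_r14.mul_right_cancel <| by
    rw [eq_neg_of_add_eq_zero_left s.transfer_1_7, neg_mul, mul_assoc _ (s.r811 * s.r48),
      s.transfer_1_11, mul_one]

theorem r26_eq : s.r26 = s.r16 * (s.r811 * s.r48) * s.r24 :=
  s.isUnit_r67.mul_left_cancel <| by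
    rw [eq_neg_of_add_eq_zero_right s.transfer_2_7, r47_eq]
    noncomm_ring

theorem r810_mul_r48 : s.r810 * s.r48 = -(s.r610 * s.r16 * (s.r811 * s.r48)) :=
  s.isUnit_r14.mul_right_cancel <| by
    rw [eq_neg_of_add_eq_zero_left s.transfer_1_10, neg_mul, mul_assoc _ (s.r811 * s.r48),
      s.transfer_1_11, mul_one]

theorem r810_mul_r58_mul_r25 : s.r810 * s.r58 * s.r25 = 1 := by
  calc s.r810 * s.r58 * s.r25
      = s.r810 * s.r48 * s.r24 + s.r810 * s.r58 * s.r25 + s.r610 * s.r26 := by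
        rw [r810_mul_r48, r26_eq]
        noncomm_ring
    _ = 1 := s.transfer_2_10

theorem isUnit_r25 : IsUnit s.r25 := .of_mul_eq_one_right _ s.r810_mul_r58_mul_r25

theorem isUnit_r810 : IsUnit s.r810 :=
  .of_mul_eq_one (s.r58 * s.r25) (by rw [← mul_assoc, r810_mul_r58_mul_r25])

theorem r59_eq : s.r59 = s.r811 * s.r58 :=
  s.isUnit_r25.mul_right_cancel <| by
    calc s.r59 * s.r25 = -(s.r69 * s.r26) := eq_neg_of_add_eq_zero_left s.transfer_2_9
      _ = -(s.r69 * s.r16 * (s.r811 * s.r48 * s.r24)) := by rw [r26_eq]; noncomm_ring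
      _ = -(s.r811 * s.r48 * s.r24) := by rw [s.transfer_1_9, one_mul]
      _ = s.r811 * s.r58 * s.r25 := (eq_neg_of_add_eq_zero_right s.transfer_2_11).symm

theorem r610_eq : s.r610 = -(s.r810 * s.r58 * s.r35 * s.r67) :=
  s.isUnit_r36.mul_right_cancel <| by
    rw [eq_neg_of_add_eq_zero_left s.transfer_3_10, neg_mul, mul_assoc _ s.r67, s.transfer_3_7,
      mul_one]

theorem r48_mul_r14 : s.r48 * s.r14 = s.r58 * s.r35 * s.r67 * s.r16 :=
  s.isUnit_r810.mul_left_cancel <| by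
    calc s.r810 * (s.r48 * s.r14) = -(s.r610 * s.r16) := by
          rw [← mul_assoc]; exact eq_neg_of_add_eq_zero_left s.transfer_1_10
      _ = s.r810 * (s.r58 * s.r35 * s.r67 * s.r16) := by rw [r610_eq]; noncomm_ring

theorem r811_mul_r58_mul_r35 : s.r811 * s.r58 * s.r35 = s.r69 * s.r36 :=
  (s.isUnit_r67.mul s.isUnit_r16).mul_right_cancel <| by
    calc s.r811 * s.r58 * s.r35 * (s.r67 * s.r16) = s.r811 * (s.r48 * s.r14) := by
          rw [r48_mul_r14]; noncomm_ring
      _ = s.r69 * (s.r36 * s.r67) * s.r16 := by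
          rw [← mul_assoc, s.transfer_1_11, mul_eq_one_symm s.transfer_3_7, mul_one,
            s.transfer_1_9]
      _ = s.r69 * s.r36 * (s.r67 * s.r16) := by noncomm_ring

end Figure6Solution

theorem Figure6Solution.one_add_one_eq_zero {R : Type*} [Ring R] [IsDedekindFiniteMonoid R]
    (s : Figure6Solution R) : (1 : R) + 1 = 0 := by
  have double : s.r69 * s.r36 + s.r69 * s.r36 = 0 := by
    simpa only [r59_eq, r811_mul_r58_mul_r35] using s.transfer_3_9
  exact (s.isUnit_r69.mul s.isUnit_r36).mul_left_eq_zero.mp (by rwa [add_mul, one_mul])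

theorem figure6_solution_forces_char_two (R : Type*) [Ring R]
    (hDF : ∀ x y : R, x * y = 1 → y * x = 1)
    (h : ∃ r14 r16 r24 r25 r26 r35 r36 r311 r47 r48 r58 r59 r67 r69 r610 r810 r811 : R,
      r69 * r16 = 1 ∧
      r810 * r48 * r14 + r610 * r16 = 0 ∧
      r47 * r14 + r67 * r16 = 0 ∧
      r811 * r48 * r14 = 1 ∧
      r59 * r25 + r69 * r26 = 0 ∧
      r810 * r48 * r24 + r810 * r58 * r25 + r610 * r26 = 1 ∧
      r47 * r24 + r67 * r26 = 0 ∧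
      r811 * r48 * r24 + r811 * r58 * r25 = 0 ∧
      r59 * r35 + r69 * r36 = 0 ∧
      r610 * r36 + r810 * r58 * r35 = 0 ∧
      r67 * r36 = 1 ∧
      r811 * r58 * r35 + r311 = 0) :
    (1 : R) + 1 = 0 := by
  have : IsDedekindFiniteMonoid R := ⟨hDF _ _⟩
  obtain ⟨r14, r16, r24, r25, r26, r35, r36, r311, r47, r48, r58, r59, r67, r69, r610, r810, r811,
    h1, h2, h3, h4, h5, h6, h7, h8, h9, h10, h11, h12⟩ := h
  exact Figure6Solution.one_add_one_eq_zero
    ⟨r14, r16, r24, r25, r26, r35, r36, r311, r47, r48, r58, r59, r67, r69, r610, r810, r811,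
      h1, h2, h3, h4, h5, h6, h7, h8, h9, h10, h11, h12⟩
end

section
/- Let R be a ring with 1 in which the element 2 = 1 + 1 is invertible (a unit). Then there exist elements r41, r42, r43, r51, r52, r61, r63, r72, r73, r84, r85, r94, r96, r104, r107, r115, r116, r117 in R satisfying the twelve equations: (1) r104·r41 = 1; (2) r94·r42 = 1; (3) r84·r43 = 1; (4) r117·r73 + r116·r63 = 1; (5) r96·r61 + r94·r41 = 0; (6) r85·r51 + r84·r41 = 0; (7) r116·r61 + r115·r51 = 0; (8) r107·r72 + r104·r42 = 0; (9) r85·r52 + r84·r42 = 0; (10) r117·r72 + r115·r52 = 0; (11) r107·r73 + r104·r43 = 0; (12) r96·r63 + r94·r43 = 0. In fact, taking r41 = r51 = r61 = r42 = r52 = r72 = r43 = r63 = r73 = r84 = r94 = r104 = 1, r85 = r96 = r107 = -1, r116 = r117 = 2⁻¹, and r115 = -2⁻¹ gives a solution. -/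
theorem figure8_solvable_of_two_invertible (R : Type*) [Ring R] (h2 : IsUnit (2 : R)) :
    ∃ r41 r42 r43 r51 r52 r61 r63 r72 r73 r84 r85 r94 r96 r104 r107 r115 r116 r117 : R,
      r104 * r41 = 1 ∧
      r94 * r42 = 1 ∧
      r84 * r43 = 1 ∧
      r117 * r73 + r116 * r63 = 1 ∧
      r96 * r61 + r94 * r41 = 0 ∧
      r85 * r51 + r84 * r41 = 0 ∧
      r116 * r61 + r115 * r51 = 0 ∧
      r107 * r72 + r104 * r42 = 0 ∧
      r85 * r52 + r84 * r42 = 0 ∧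
      r117 * r72 + r115 * r52 = 0 ∧
      r107 * r73 + r104 * r43 = 0 ∧
      r96 * r63 + r94 * r43 = 0 ∧
      -- the explicit assignment is a solution
      (∃ u : R, 2 * u = 1 ∧ u * 2 = 1 ∧
        r41 = 1 ∧ r51 = 1 ∧ r61 = 1 ∧ r42 = 1 ∧ r52 = 1 ∧ r72 = 1 ∧
        r43 = 1 ∧ r63 = 1 ∧ r73 = 1 ∧ r84 = 1 ∧ r94 = 1 ∧ r104 = 1 ∧
        r85 = -1 ∧ r96 = -1 ∧ r107 = -1 ∧
        r116 = u ∧ r117 = u ∧ r115 = -u) := by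
  obtain ⟨u, hu, hu'⟩ := isUnit_iff_exists.mp h2
  have half_add_half : u + u = 1 := (two_mul u).symm.trans hu
  refine ⟨1, 1, 1, 1, 1, 1, 1, 1, 1, 1, -1, 1, -1, 1, -1, -u, u, u, ?_⟩
  simp only [mul_one, neg_add_cancel, add_neg_cancel, half_add_half, true_and]
  exact ⟨u, hu, hu', by simp⟩
end

section
/- Let R be a Dedekind finite ring with 1 (i.e., for all x, y in R, xy = 1 implies yx = 1). If there exist elements r41, r42, r43, r51, r52, r61, r63, r72, r73, r84, r85, r94, r96, r104, r107, r115, r116, r117 in R satisfying the twelve equations: (1) r104·r41 = 1; (2) r94·r42 = 1; (3) r84·r43 = 1; (4) r117·r73 + r116·r63 = 1; (5) r96·r61 + r94·r41 = 0; (6) r85·r51 + r84·r41 = 0; (7) r116·r61 + r115·r51 = 0; (8) r107·r72 + r104·r42 = 0; (9) r85·r52 + r84·r42 = 0; (10) r117·r72 + r115·r52 = 0; (11) r107·r73 + r104·r43 = 0; (12) r96·r63 + r94·r43 = 0, then the element 2 = 1 + 1 is invertible (a unit) in R. -/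
/-!
In each of the pairs of equations (5, 12), (6, 9) and (8, 11) the two equations share their
left factor `a` and a right-invertible second term `b`; Dedekind finiteness makes `a` left
cancellable, which identifies `r61 r104 = r63 r84`, `r51 r104 = r52 r94` and
`r72 r94 = r73 r84`. Substituting these into equation (4) shows that both of its summands equal
`-(r115 r52 r94 r43)`, so this element is an inverse of `2`.
-/

section

variable {R : Type*} [Ring R] [IsDedekindFiniteMonoid R]

theorem mul_mul_eq_neg_of_mul_add_mul_eq_zero {a b p q s : R} (hsq : s * q = 1)
    (h : a * p + b * q = 0) : a * (p * s) = -b := by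
  rw [← mul_assoc, eq_neg_of_add_eq_zero_left h, neg_mul, mul_assoc, mul_eq_one_symm hsq,
    mul_one]

theorem mul_eq_mul_of_mul_add_mul_eq_zero {a b t p q s p' q' s' : R} (hbt : b * t = 1)
    (hsq : s * q = 1) (hs'q' : s' * q' = 1)
    (h : a * p + b * q = 0) (h' : a * p' + b * q' = 0) : p * s = p' * s' := by
  have hu := mul_mul_eq_neg_of_mul_add_mul_eq_zero hsq h
  have ha : IsLeftRegular a :=
    IsDedekindFiniteMonoid.iff_isLeftRegular_of_mul_eq_one.mp ‹_› a (p * s * -t)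
      (by rw [← mul_assoc, hu, neg_mul_neg, hbt])
  exact ha (hu.trans (mul_mul_eq_neg_of_mul_add_mul_eq_zero hs'q' h').symm)

end

theorem figure8_solution_forces_two_invertible (R : Type*) [Ring R]
    (hDF : ∀ x y : R, x * y = 1 → y * x = 1)
    (h : ∃ r41 r42 r43 r51 r52 r61 r63 r72 r73 r84 r85 r94 r96 r104 r107 r115 r116 r117 : R,
      r104 * r41 = 1 ∧
      r94 * r42 = 1 ∧
      r84 * r43 = 1 ∧
      r117 * r73 + r116 * r63 = 1 ∧
      r96 * r61 + r94 * r41 = 0 ∧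
      r85 * r51 + r84 * r41 = 0 ∧
      r116 * r61 + r115 * r51 = 0 ∧
      r107 * r72 + r104 * r42 = 0 ∧
      r85 * r52 + r84 * r42 = 0 ∧
      r117 * r72 + r115 * r52 = 0 ∧
      r107 * r73 + r104 * r43 = 0 ∧
      r96 * r63 + r94 * r43 = 0) :
    IsUnit (2 : R) := by
  obtain ⟨r41, r42, r43, r51, r52, r61, r63, r72, r73, r84, r85, r94, r96, r104, r107, r115,
    r116, r117, h1, h2, h3, h4, h5, h6, h7, h8, h9, h10, h11, h12⟩ := h
  have : IsDedekindFiniteMonoid R := ⟨hDF _ _⟩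
  have c1 : r61 * r104 = r63 * r84 := mul_eq_mul_of_mul_add_mul_eq_zero h2 h1 h3 h5 h12
  have c2 : r51 * r104 = r52 * r94 := mul_eq_mul_of_mul_add_mul_eq_zero h3 h1 h2 h6 h9
  have c3 : r72 * r94 = r73 * r84 := mul_eq_mul_of_mul_add_mul_eq_zero h1 h2 h3 h8 h11
  have e116 : r116 * r63 = -(r115 * r52 * r94 * r43) := calc
    r116 * r63 = r116 * (r61 * r104) * r43 := by rw [c1, mul_assoc, mul_assoc, h3, mul_one]
    _ = -(r115 * (r51 * r104) * r43) := by
      rw [← mul_assoc r116, eq_neg_of_add_eq_zero_left h7]; noncomm_ring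
    _ = -(r115 * r52 * r94 * r43) := by rw [c2]; noncomm_ring
  have e117 : r117 * r73 = -(r115 * r52 * r94 * r43) := calc
    r117 * r73 = r117 * (r72 * r94) * r43 := by rw [c3, mul_assoc, mul_assoc, h3, mul_one]
    _ = -(r115 * r52 * r94 * r43) := by
      rw [← mul_assoc r117, eq_neg_of_add_eq_zero_left h10]; noncomm_ring
  exact IsUnit.of_mul_eq_one _ (by rw [two_mul, ← h4, e116, e117])
end

section
/- Let F be a field and let k, n be natural numbers. Suppose there exist matrices r35 of size k×n, r13 of size n×k, r34 of size k×n, and r23 of size n×k with entries in F such that r35·r13 = 1 (the k×k identity matrix), r34·r23 = 1 (the k×k identity matrix), and r35·r23 = 0 (the k×k zero matrix). Then n ≥ 2k. -/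
/-! The columns of `r13` and of `r23` together span a subspace of `Fⁿ` of dimension `2k`:
if `r13 a + r23 b = 0`, applying `r35` gives `a = 0`, and then applying `r34` gives `b = 0`. -/

namespace LinearMap

variable {R U V W : Type*} [Semiring R] [AddCommMonoid U] [AddCommMonoid V] [AddCommGroup W]
  [Module R U] [Module R V] [Module R W]

theorem injective_coprod_of_comp_eq_id {b : U →ₗ[R] W} {c : V →ₗ[R] W} {a : W →ₗ[R] U}
    {d : W →ₗ[R] V} (hab : a ∘ₗ b = id) (hdc : d ∘ₗ c = id) (hac : a ∘ₗ c = 0) :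
    Function.Injective (b.coprod c) := by
  rintro ⟨x₁, x₂⟩ ⟨y₁, y₂⟩ h
  simp only [coprod_apply] at h
  have h₁ : x₁ = y₁ := by
    simpa [← comp_apply a b, ← comp_apply a c, hab, hac] using congrArg a h
  subst h₁
  have h₂ : x₂ = y₂ := by
    simpa [← comp_apply d c, hdc] using congrArg d (add_left_cancel h)
  rw [h₂]

theorem finrank_add_finrank_le_of_comp_eq_id [StrongRankCondition R] [Module.Free R U]
    [Module.Free R V] [Module.Finite R U] [Module.Finite R V] [Module.Finite R W]
    {b : U →ₗ[R] W} {c : V →ₗ[R] W} {a : W →ₗ[R] U} {d : W →ₗ[R] V}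
    (hab : a ∘ₗ b = id) (hdc : d ∘ₗ c = id) (hac : a ∘ₗ c = 0) :
    Module.finrank R U + Module.finrank R V ≤ Module.finrank R W := by
  rw [← Module.finrank_prod]
  exact finrank_le_finrank_of_injective (injective_coprod_of_comp_eq_id hab hdc hac)

end LinearMap

theorem Matrix.card_add_card_le_of_mul_eq_one {R l m n : Type*} [CommRing R]
    [StrongRankCondition R] [Fintype l] [Fintype m] [Fintype n] [DecidableEq l] [DecidableEq m]
    {A : Matrix l n R} {B : Matrix n l R} {D : Matrix m n R} {C : Matrix n m R}
    (hAB : A * B = 1) (hDC : D * C = 1) (hAC : A * C = 0) :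
    Fintype.card l + Fintype.card m ≤ Fintype.card n := by
  simpa using LinearMap.finrank_add_finrank_le_of_comp_eq_id
    (b := B.mulVecLin) (c := C.mulVecLin) (a := A.mulVecLin) (d := D.mulVecLin)
    (by rw [← mulVecLin_mul, hAB, mulVecLin_one]) (by rw [← mulVecLin_mul, hDC, mulVecLin_one])
    (by rw [← mulVecLin_mul, hAC]; ext; simp)

theorem satellite_network_capacity_upper_bound (F : Type*) [Field F] (k n : ℕ)
    (r35 : Matrix (Fin k) (Fin n) F) (r13 : Matrix (Fin n) (Fin k) F)
    (r34 : Matrix (Fin k) (Fin n) F) (r23 : Matrix (Fin n) (Fin k) F)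
    (h1 : r35 * r13 = 1) (h2 : r34 * r23 = 1) (h3 : r35 * r23 = 0) :
    n ≥ 2 * k := by
  simpa [two_mul] using Matrix.card_add_card_le_of_mul_eq_one h1 h2 h3
end

section
/- Let F be a field. Then there exist matrices over F, namely r14, r16, r24, r25, r26, r35, r36 of size 4×3, r311 of size 3×3, r47, r59, r67, r69, r610, r810, r811 of size 3×4, and r48, r58 of size 4×4, satisfying the twelve block equations: (1) r69·r16 = 1; (2) r810·r48·r14 + r610·r16 = 0; (3) r47·r14 + r67·r16 = 0; (4) r811·r48·r14 = 1; (5) r59·r25 + r69·r26 = 0; (6) r810·r48·r24 + r810·r58·r25 + r610·r26 = 1; (7) r47·r24 + r67·r26 = 0; (8) r811·r48·r24 + r811·r58·r25 = 0; (9) r59·r35 + r69·r36 = 0; (10) r610·r36 + r810·r58·r35 = 0; (11) r67·r36 = 1; (12) r811·r58·r35 + r311 = 0, where 1 denotes the 3×3 identity matrix and 0 the 3×3 zero matrix. Hence the network of figure 6 has a solution of capacity 3/4 over every field. -/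
/-!
The twelve demands are polynomial identities with integer coefficients in the entries of the
coding matrices, so they are preserved by ring homomorphisms. It therefore suffices to exhibit
one solution over `ℤ`, which is checked by computation, and to push it into `F` along `ℤ → F`.
-/

/-- The coding matrices of a capacity-`3/4` linear code on the network of figure 6: `rij` is the
matrix on the edge from node `i` to node `j`. -/
structure Figure6Code (R : Type*) where
  (r14 r16 r24 r25 r26 r35 r36 : Matrix (Fin 4) (Fin 3) R)
  r311 : Matrix (Fin 3) (Fin 3) R
  (r47 r59 r67 r69 r610 r810 r811 : Matrix (Fin 3) (Fin 4) R)
  (r48 r58 : Matrix (Fin 4) (Fin 4) R)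

namespace Figure6Code

variable {R S : Type*}

def map (c : Figure6Code R) (f : R → S) : Figure6Code S where
  r14 := c.r14.map f
  r16 := c.r16.map f
  r24 := c.r24.map f
  r25 := c.r25.map f
  r26 := c.r26.map f
  r35 := c.r35.map f
  r36 := c.r36.map f
  r311 := c.r311.map f
  r47 := c.r47.map f
  r59 := c.r59.map f
  r67 := c.r67.map f
  r69 := c.r69.map f
  r610 := c.r610.map f
  r810 := c.r810.map f
  r811 := c.r811.map f
  r48 := c.r48.map f
  r58 := c.r58.map f

def SolvesDemands [Semiring R] (c : Figure6Code R) : Prop :=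
  c.r69 * c.r16 = 1 ∧
  c.r810 * c.r48 * c.r14 + c.r610 * c.r16 = 0 ∧
  c.r47 * c.r14 + c.r67 * c.r16 = 0 ∧
  c.r811 * c.r48 * c.r14 = 1 ∧
  c.r59 * c.r25 + c.r69 * c.r26 = 0 ∧
  c.r810 * c.r48 * c.r24 + c.r810 * c.r58 * c.r25 + c.r610 * c.r26 = 1 ∧
  c.r47 * c.r24 + c.r67 * c.r26 = 0 ∧
  c.r811 * c.r48 * c.r24 + c.r811 * c.r58 * c.r25 = 0 ∧
  c.r59 * c.r35 + c.r69 * c.r36 = 0 ∧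
  c.r610 * c.r36 + c.r810 * c.r58 * c.r35 = 0 ∧
  c.r67 * c.r36 = 1 ∧
  c.r811 * c.r58 * c.r35 + c.r311 = 0

theorem SolvesDemands.map [Semiring R] [Semiring S] {c : Figure6Code R} (h : c.SolvesDemands)
    (f : R →+* S) : (c.map f).SolvesDemands := by
  obtain ⟨h1, h2, h3, h4, h5, h6, h7, h8, h9, h10, h11, h12⟩ := h
  refine ⟨?_, ?_, ?_, ?_, ?_, ?_, ?_, ?_, ?_, ?_, ?_, ?_⟩ <;>
    simp only [Figure6Code.map, ← Matrix.map_mul, ← Matrix.map_add f (map_add f), h1, h2, h3, h4,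
      h5, h6, h7, h8, h9, h10, h11, h12, Matrix.map_one f (map_zero f) (map_one f),
      Matrix.map_zero f (map_zero f)]

def integral : Figure6Code ℤ where
  r14 := !![1, 0, 0; 0, 1, 0; 0, 0, 1; 0, 0, 0]
  r16 := !![0, 0, 0; 1, 0, 0; 0, 1, 0; 0, 0, 1]
  r24 := !![0, 0, 0; -1, 0, 0; 0, -1, 1; 1, 0, 0]
  r25 := !![0, 0, 0; 1, 0, 0; 0, 1, 0; 0, 0, 1]
  r26 := !![0, 1, 0; 0, 0, 0; 1, 0, 0; 0, 1, 1]
  r35 := !![1, 0, 0; 0, 1, 0; 0, 0, 1; 0, 0, 0]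
  r36 := !![0, 0, 0; 1, 0, 0; 0, 1, 0; 0, 0, 1]
  r311 := !![-1, 0, 0; 0, -1, 0; 0, 0, -1]
  r47 := !![-1, 0, 0, 0; 0, -1, 0, -2; 0, 0, -1, 0]
  r59 := !![-1, 0, 0, 0; 0, -1, 0, 0; 0, 0, -1, -1]
  r67 := !![0, 1, 0, 0; 0, 0, 1, 0; -2, 0, 0, 1]
  r69 := !![0, 1, 0, 0; 0, 0, 1, 0; 0, 0, 0, 1]
  r610 := !![0, 0, -1, 0; 1, 1, 0, 0; -1, 0, 0, 1]
  r810 := !![0, 1, 0, 2; -1, 0, 0, 0; 0, 0, -1, 0]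
  r811 := !![1, 0, 0, 0; 0, 1, 0, 0; 0, 0, 1, 0]
  r48 := !![1, 0, 0, 0; 0, 1, 0, 0; 0, 0, 1, 0; 0, 0, 0, 1]
  r58 := !![1, 0, 0, 0; 0, 1, 0, 0; 0, 0, 1, -1; 0, 0, 0, 0]

theorem integral_solvesDemands : integral.SolvesDemands := by
  unfold SolvesDemands
  decide

end Figure6Code

theorem figure6_capacity_three_quarters (F : Type*) [Field F] :
    ∃ (r14 r16 r24 r25 r26 r35 r36 : Matrix (Fin 4) (Fin 3) F)
      (r311 : Matrix (Fin 3) (Fin 3) F)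
      (r47 r59 r67 r69 r610 r810 r811 : Matrix (Fin 3) (Fin 4) F)
      (r48 r58 : Matrix (Fin 4) (Fin 4) F),
      r69 * r16 = 1 ∧
      r810 * r48 * r14 + r610 * r16 = 0 ∧
      r47 * r14 + r67 * r16 = 0 ∧
      r811 * r48 * r14 = 1 ∧
      r59 * r25 + r69 * r26 = 0 ∧
      r810 * r48 * r24 + r810 * r58 * r25 + r610 * r26 = 1 ∧
      r47 * r24 + r67 * r26 = 0 ∧
      r811 * r48 * r24 + r811 * r58 * r25 = 0 ∧
      r59 * r35 + r69 * r36 = 0 ∧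
      r610 * r36 + r810 * r58 * r35 = 0 ∧
      r67 * r36 = 1 ∧
      r811 * r58 * r35 + r311 = 0 := by
  let c := Figure6Code.integral.map (Int.castRingHom F)
  exact ⟨c.r14, c.r16, c.r24, c.r25, c.r26, c.r35, c.r36, c.r311, c.r47, c.r59, c.r67, c.r69,
    c.r610, c.r810, c.r811, c.r48, c.r58,
    Figure6Code.integral_solvesDemands.map (Int.castRingHom F)⟩
end

section
/- Let F be a field of characteristic 2. Then there exist matrices over F, namely r41, r51, r61, r42, r52, r72, r43, r63, r73 of size 4×3 and r84, r104, r85, r115, r94, r96, r116, r107, r117 of size 3×4, satisfying the twelve block equations: (1) r104·r41 = 1; (2) r94·r42 = 1; (3) r84·r43 = 1; (4) r117·r73 + r116·r63 = 1; (5) r96·r61 + r94·r41 = 0; (6) r85·r51 + r84·r41 = 0; (7) r116·r61 + r115·r51 = 0; (8) r107·r72 + r104·r42 = 0; (9) r85·r52 + r84·r42 = 0; (10) r117·r72 + r115·r52 = 0; (11) r107·r73 + r104·r43 = 0; (12) r96·r63 + r94·r43 = 0, where 1 denotes the 3×3 identity matrix and 0 the 3×3 zero matrix. Hence the network of figure 8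 has a solution of capacity 3/4 over every field of characteristic 2. -/
/-!
Over `ZMod 2` a solution is written down explicitly and checked by computation. Every ring of
characteristic 2 receives a ring homomorphism from `ZMod 2`, and applying a ring homomorphism
entrywise commutes with matrix sums and products and preserves `0` and `1`, so the solution
transports to `F`.
-/

/-- A solution of capacity `3/4` of the network of figure 8 over `R`. -/
def HasFigure8Solution (R : Type*) [Semiring R] : Prop :=
  ∃ (r41 r51 r61 r42 r52 r72 r43 r63 r73 : Matrix (Fin 4) (Fin 3) R)
    (r84 r104 r85 r115 r94 r96 r116 r107 r117 : Matrix (Fin 3) (Fin 4) R),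
    r104 * r41 = 1 ∧
    r94 * r42 = 1 ∧
    r84 * r43 = 1 ∧
    r117 * r73 + r116 * r63 = 1 ∧
    r96 * r61 + r94 * r41 = 0 ∧
    r85 * r51 + r84 * r41 = 0 ∧
    r116 * r61 + r115 * r51 = 0 ∧
    r107 * r72 + r104 * r42 = 0 ∧
    r85 * r52 + r84 * r42 = 0 ∧
    r117 * r72 + r115 * r52 = 0 ∧
    r107 * r73 + r104 * r43 = 0 ∧
    r96 * r63 + r94 * r43 = 0

section MapMatrix

variable {l m n p R S : Type*} [Fintype m] [Fintype p] [Semiring R] [Semiring S]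

theorem Matrix.map_mul_add_mul (f : R →+* S) (A : Matrix l m R) (B : Matrix m n R)
    (C : Matrix l p R) (D : Matrix p n R) :
    (A * B + C * D).map f = A.map f * B.map f + C.map f * D.map f := by
  rw [Matrix.map_add f (map_add f), Matrix.map_mul, Matrix.map_mul]

theorem Matrix.map_mul_eq_one [DecidableEq n] (f : R →+* S) {A : Matrix n m R}
    {B : Matrix m n R} (h : A * B = 1) : A.map f * B.map f = 1 := by
  rw [← Matrix.map_mul, h, Matrix.map_one f (map_zero f) (map_one f)]

theorem Matrix.map_mul_add_mul_eq_one [DecidableEq l] (f : R →+* S) {A : Matrix l m R}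
    {B : Matrix m l R} {C : Matrix l p R} {D : Matrix p l R} (h : A * B + C * D = 1) :
    A.map f * B.map f + C.map f * D.map f = 1 := by
  rw [← Matrix.map_mul_add_mul, h, Matrix.map_one f (map_zero f) (map_one f)]

theorem Matrix.map_mul_add_mul_eq_zero (f : R →+* S) {A : Matrix l m R} {B : Matrix m n R}
    {C : Matrix l p R} {D : Matrix p n R} (h : A * B + C * D = 0) :
    A.map f * B.map f + C.map f * D.map f = 0 := by
  rw [← Matrix.map_mul_add_mul, h, Matrix.map_zero f (map_zero f)]

end MapMatrix

theorem HasFigure8Solution.map {R S : Type*} [Semiring R] [Semiring S] (f : R →+* S)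
    (h : HasFigure8Solution R) : HasFigure8Solution S := by
  obtain ⟨r41, r51, r61, r42, r52, r72, r43, r63, r73, r84, r104, r85, r115, r94, r96, r116,
    r107, r117, h1, h2, h3, h4, h5, h6, h7, h8, h9, h10, h11, h12⟩ := h
  exact ⟨r41.map f, r51.map f, r61.map f, r42.map f, r52.map f, r72.map f, r43.map f, r63.map f,
    r73.map f, r84.map f, r104.map f, r85.map f, r115.map f, r94.map f, r96.map f, r116.map f,
    r107.map f, r117.map f, Matrix.map_mul_eq_one f h1, Matrix.map_mul_eq_one f h2,
    Matrix.map_mul_eq_one f h3, Matrix.map_mul_add_mul_eq_one f h4,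
    Matrix.map_mul_add_mul_eq_zero f h5, Matrix.map_mul_add_mul_eq_zero f h6,
    Matrix.map_mul_add_mul_eq_zero f h7, Matrix.map_mul_add_mul_eq_zero f h8,
    Matrix.map_mul_add_mul_eq_zero f h9, Matrix.map_mul_add_mul_eq_zero f h10,
    Matrix.map_mul_add_mul_eq_zero f h11, Matrix.map_mul_add_mul_eq_zero f h12⟩

theorem hasFigure8Solution_zmod_two : HasFigure8Solution (ZMod 2) := by
  refine ⟨!![0, 1, 1; 0, 1, 0; 0, 1, 1; 1, 0, 0], !![1, 1, 1; 0, 0, 0; 1, 1, 1; 1, 0, 0],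
    !![0, 1, 0; 1, 0, 0; 0, 0, 0; 1, 1, 1], !![0, 0, 0; 0, 0, 1; 1, 1, 1; 0, 1, 1],
    !![1, 1, 0; 1, 0, 1; 1, 0, 0; 0, 1, 1], !![1, 0, 1; 0, 1, 1; 0, 1, 1; 0, 0, 1],
    !![1, 1, 1; 0, 1, 0; 1, 0, 0; 0, 0, 1], !![0, 1, 0; 0, 1, 0; 1, 1, 0; 1, 1, 0],
    !![1, 0, 1; 1, 0, 0; 1, 1, 0; 1, 1, 1],
    !![0, 0, 1, 0; 1, 0, 1, 1; 0, 0, 0, 1], !![1, 0, 1, 1; 1, 1, 1, 0; 1, 1, 0, 0],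
    !![0, 0, 1, 1; 1, 1, 1, 1; 0, 0, 0, 1], !![1, 1, 0, 1; 1, 1, 0, 1; 1, 0, 0, 1],
    !![1, 0, 1, 1; 1, 1, 0, 1; 0, 1, 0, 0], !![0, 1, 0, 0; 1, 0, 0, 1; 1, 0, 0, 0],
    !![0, 1, 0, 1; 0, 1, 1, 1; 0, 1, 0, 1], !![1, 0, 0, 1; 1, 1, 0, 0; 0, 1, 1, 1],
    !![0, 0, 0, 0; 0, 0, 0, 0; 1, 0, 0, 0], ?_⟩
  decide

theorem figure8_capacity_three_quarters_char_two (F : Type*) [Field F] [CharP F 2] :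
    ∃ (r41 r51 r61 r42 r52 r72 r43 r63 r73 : Matrix (Fin 4) (Fin 3) F)
      (r84 r104 r85 r115 r94 r96 r116 r107 r117 : Matrix (Fin 3) (Fin 4) F),
      r104 * r41 = 1 ∧
      r94 * r42 = 1 ∧
      r84 * r43 = 1 ∧
      r117 * r73 + r116 * r63 = 1 ∧
      r96 * r61 + r94 * r41 = 0 ∧
      r85 * r51 + r84 * r41 = 0 ∧
      r116 * r61 + r115 * r51 = 0 ∧
      r107 * r72 + r104 * r42 = 0 ∧
      r85 * r52 + r84 * r42 = 0 ∧
      r117 * r72 + r115 * r52 = 0 ∧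
      r107 * r73 + r104 * r43 = 0 ∧
      r96 * r63 + r94 * r43 = 0 :=
  hasFigure8Solution_zmod_two.map (ZMod.castHom (dvd_refl 2) F)
end

section
/- Let F be a field whose characteristic is not 2 and let k be a positive integer. Then there do NOT exist k×k matrices r14, r16, r24, r25, r26, r35, r36, r311, r47, r48, r58, r59, r67, r69, r610, r810, r811 over F satisfying the twelve equations: (1) r69·r16 = 1; (2) r810·r48·r14 + r610·r16 = 0; (3) r47·r14 + r67·r16 = 0; (4) r811·r48·r14 = 1; (5) r59·r25 + r69·r26 = 0; (6) r810·r48·r24 + r810·r58·r25 + r610·r26 = 1; (7) r47·r24 + r67·r26 = 0; (8) r811·r48·r24 + r811·r58·r25 = 0; (9) r59·r35 + r69·r36 = 0; (10) r610·r36 + r810·r58·r35 = 0; (11) r67·r36 = 1; (12) r811·r58·r35 + r311 = 0, where 1 denotes the k×k identity matrix and 0 the k×k zero matrix. In other words, the network of figure 6 has no solution of capacity 1 over F. -/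
/-!
Everything happens in an arbitrary Dedekind-finite ring, where one-sided inverses are two-sided.
Equations (3), (7) and (5), (9) are two instances of one pattern which solves them for
`r24 = r14 r69 r26` and `r25 = r35 r67 r26`. Cancelling the unit `r811` from (8) (a unit by (4))
gives `r48 r24 + r58 r25 = 0`, so (6) makes `r26` invertible with inverse `r610`, and hence
`r48 r14 r69 + r58 r35 r67 = 0`. Multiplying this on the left by `r810` and using (2), (10)
yields `-2 r610 = 0`, so `2 = 0`. In `M_k(F)` with `k > 0` and `char F ≠ 2` this is impossible.
-/

theorem eq_mul_mul_of_mul_add_mul_eq_zero {R : Type*} [Ring R] [IsDedekindFiniteMonoid R]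
    {a c x y x' y' d z : R} (h : a * x + c * y = 0) (h' : a * x' + c * y' = 0)
    (hcd : c * d = 1) (hzy : z * y = 1) : x' = x * z * y' := by
  have hyz : y * z = 1 := mul_eq_one_comm.mp hzy
  have hax : a * x = -(c * y) := eq_neg_of_add_eq_zero_left h
  have ha : IsLeftRegular a :=
    IsDedekindFiniteMonoid.iff_isLeftRegular_of_mul_eq_one.mp ‹_› a (-(x * z * d)) <| by
      calc a * -(x * z * d) = -(a * x * z * d) := by noncomm_ring
        _ = c * (y * z) * d := by rw [hax]; noncomm_ring
        _ = 1 := by rw [hyz, mul_one, hcd]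
  apply ha
  calc a * x' = -(c * y') := eq_neg_of_add_eq_zero_left h'
    _ = a * x * z * y' := by rw [hax, neg_mul, neg_mul, mul_assoc c, hyz, mul_one]
    _ = a * (x * z * y') := by noncomm_ring

theorem two_eq_zero_of_figure6_equations {R : Type*} [Ring R] [IsDedekindFiniteMonoid R]
    {r14 r16 r24 r25 r26 r35 r36 r47 r48 r58 r59 r67 r69 r610 r810 r811 : R}
    (h1 : r69 * r16 = 1)
    (h2 : r810 * r48 * r14 + r610 * r16 = 0)
    (h3 : r47 * r14 + r67 * r16 = 0)
    (h4 : r811 * r48 * r14 = 1)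
    (h5 : r59 * r25 + r69 * r26 = 0)
    (h6 : r810 * r48 * r24 + r810 * r58 * r25 + r610 * r26 = 1)
    (h7 : r47 * r24 + r67 * r26 = 0)
    (h8 : r811 * r48 * r24 + r811 * r58 * r25 = 0)
    (h9 : r59 * r35 + r69 * r36 = 0)
    (h10 : r610 * r36 + r810 * r58 * r35 = 0)
    (h11 : r67 * r36 = 1) :
    (2 : R) = 0 := by
  have hr24 : r24 = r14 * r69 * r26 := eq_mul_mul_of_mul_add_mul_eq_zero h3 h7 h11 h1
  have hr25 : r25 = r35 * r67 * r26 := eq_mul_mul_of_mul_add_mul_eq_zero h9 h5 h1 h11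
  have hr811 : IsUnit r811 := IsUnit.of_mul_eq_one (r48 * r14) (by rw [← mul_assoc, h4])
  have hsum : r48 * r24 + r58 * r25 = 0 :=
    hr811.mul_right_eq_zero.mp (by rw [mul_add, ← mul_assoc, ← mul_assoc, h8])
  have h610 : r610 * r26 = 1 := by
    rwa [mul_assoc, mul_assoc, ← mul_add, hsum, mul_zero, zero_add] at h6
  have hs : r48 * r14 * r69 + r58 * r35 * r67 = 0 := by
    refine (IsUnit.of_mul_eq_one_right r610 h610).mul_left_eq_zero.mp ?_
    rw [← hsum, hr24, hr25]
    noncomm_ring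
  have h2r610 : 2 * r610 = 0 := by
    refine neg_eq_zero.mp (Eq.symm ?_)
    calc 0 = r810 * (r48 * r14 * r69 + r58 * r35 * r67) := by rw [hs, mul_zero]
      _ = r810 * r48 * r14 * r69 + r810 * r58 * r35 * r67 := by noncomm_ring
      _ = -(r610 * (r16 * r69)) - r610 * (r36 * r67) := by
        rw [eq_neg_of_add_eq_zero_left h2, eq_neg_of_add_eq_zero_right h10]; noncomm_ring
      _ = -(2 * r610) := by
        rw [mul_eq_one_comm.mp h1, mul_eq_one_comm.mp h11]; noncomm_ring
  rw [← mul_one (2 : R), ← h610, ← mul_assoc, h2r610, zero_mul]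

theorem figure6_no_capacity_one_char_ne_two (F : Type*) [Field F]
    (hchar : ringChar F ≠ 2) (k : ℕ) (hk : 0 < k) :
    ¬ ∃ r14 r16 r24 r25 r26 r35 r36 r311 r47 r48 r58 r59 r67 r69 r610 r810 r811 :
        Matrix (Fin k) (Fin k) F,
      r69 * r16 = 1 ∧
      r810 * r48 * r14 + r610 * r16 = 0 ∧
      r47 * r14 + r67 * r16 = 0 ∧
      r811 * r48 * r14 = 1 ∧
      r59 * r25 + r69 * r26 = 0 ∧
      r810 * r48 * r24 + r810 * r58 * r25 + r610 * r26 = 1 ∧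
      r47 * r24 + r67 * r26 = 0 ∧
      r811 * r48 * r24 + r811 * r58 * r25 = 0 ∧
      r59 * r35 + r69 * r36 = 0 ∧
      r610 * r36 + r810 * r58 * r35 = 0 ∧
      r67 * r36 = 1 ∧
      r811 * r58 * r35 + r311 = 0 := by
  rintro ⟨r14, r16, r24, r25, r26, r35, r36, -, r47, r48, r58, r59, r67, r69, r610, r810, r811,
    h1, h2, h3, h4, h5, h6, h7, h8, h9, h10, h11, -⟩
  have h2zero := two_eq_zero_of_figure6_equations h1 h2 h3 h4 h5 h6 h7 h8 h9 h10 h11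
  exact Ring.two_ne_zero hchar (by simpa [Matrix.ofNat_apply] using congr($h2zero ⟨0, hk⟩ ⟨0, hk⟩))
end
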